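/- Let Φ ∈ ℝ^{n×p} with δ_k + θ_{k,k} < 1 (k-restricted isometry and (k,k)-restricted orthogonality constants). Then the null space of Φ contains no nonzero vector h satisfying ‖h_{T^c}‖₁ ≤ ‖h_T‖₁, where T is the index set of the k largest-magnitude components of h. In particular, Φ satisfies the null space property of order k. -/

import Mathlib

/-!
Split a null-space vector `h = x + y` into its restriction `x` to the `k` largest entries and the
tail `y`. If `‖y‖₁ ≤ ‖x‖₁`, every entry of `y` is at most `α = ‖x‖₁ / k` and `‖y‖₁ ≤ k α`, so `y` is
a convex combination of `k`-sparse vectors supported off `x` with entries at most `α` (the sparse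
representation of a polytope of Cai and Zhang), each of `ℓ²`-norm at most `√k α ≤ ‖x‖₂`. Hence
`(1 - δ) ‖x‖₂² ≤ ‖Φ x‖₂² = -⟨Φ x, Φ y⟩ ≤ θ ‖x‖₂²`, contradicting `δ + θ < 1`.

The convex decomposition is by induction on the number of entries with `0 < |v i| < α`: while two
such entries exist, shifting mass between them in either direction until one of them reaches `0`
or `α` writes `v` as a convex combination of two vectors with fewer such entries.
-/

noncomputable def l2 {m : ℕ} (v : Fin m → ℝ) : ℝ := Real.sqrt (∑ i, (v i)^2)

def Sparse {m : ℕ} (k : ℕ) (v : Fin m → ℝ) : Prop :=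
  ∃ s : Finset (Fin m), s.card ≤ k ∧ ∀ i ∉ s, v i = 0

open Finset Matrix

section L2

variable {p k : ℕ} {v : Fin p → ℝ}

lemma l2_sq (v : Fin p → ℝ) : l2 v ^ 2 = v ⬝ᵥ v := by
  rw [l2, Real.sq_sqrt (by positivity)]
  simp [dotProduct, sq]

lemma sum_comp_eq_sum_of_eq_zero {s : Finset (Fin p)} (hv : ∀ i ∉ s, v i = 0) (f : ℝ → ℝ)
    (hf : f 0 = 0) : ∑ i, f (v i) = ∑ i ∈ s, f (v i) :=
  (sum_subset (subset_univ s) fun i _ hi => by rw [hv i hi, hf]).symm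

lemma l2_nonneg (v : Fin p → ℝ) : 0 ≤ l2 v :=
  Real.sqrt_nonneg _

lemma l2_pos (hv : v ≠ 0) : 0 < l2 v := by
  obtain ⟨i, hi⟩ := Function.ne_iff.mp hv
  exact Real.sqrt_pos.mpr <|
    sum_pos' (fun j _ => sq_nonneg (v j)) ⟨i, mem_univ i, sq_pos_of_ne_zero hi⟩

lemma Sparse.sum_abs_le_sqrt_mul_l2 (hv : Sparse k v) : ∑ i, |v i| ≤ √k * l2 v := by
  obtain ⟨s, hs, hvs⟩ := hv
  rw [l2, ← Real.sqrt_mul (Nat.cast_nonneg k), sum_comp_eq_sum_of_eq_zero hvs _ abs_zero,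
    sum_comp_eq_sum_of_eq_zero hvs (· ^ 2) (zero_pow two_ne_zero)]
  refine Real.le_sqrt_of_sq_le ?_
  calc (∑ i ∈ s, |v i|) ^ 2 ≤ #s * ∑ i ∈ s, |v i| ^ 2 := sq_sum_le_card_mul_sum_sq
    _ ≤ k * ∑ i ∈ s, v i ^ 2 := by
      simp only [sq_abs]
      gcongr

lemma Sparse.l2_le_sqrt_mul {α : ℝ} (hv : Sparse k v) (hα : 0 ≤ α) (hvα : ∀ i, |v i| ≤ α) :
    l2 v ≤ √k * α := by
  obtain ⟨s, hs, hvs⟩ := hv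
  rw [l2, ← Real.sqrt_sq hα, ← Real.sqrt_mul (Nat.cast_nonneg k),
    sum_comp_eq_sum_of_eq_zero hvs (· ^ 2) (zero_pow two_ne_zero)]
  refine Real.sqrt_le_sqrt ?_
  calc ∑ i ∈ s, v i ^ 2 ≤ ∑ _i ∈ s, α ^ 2 :=
        sum_le_sum fun i _ => sq_le_sq' (abs_le.mp (hvα i)).1 (abs_le.mp (hvα i)).2
    _ = #s * α ^ 2 := by rw [sum_const, nsmul_eq_mul]
    _ ≤ k * α ^ 2 := by gcongr

lemma Sparse.sqrt_mul_sum_abs_div_le_l2 (hv : Sparse k v) :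
    √k * ((∑ i, |v i|) / k) ≤ l2 v := by
  rcases k.eq_zero_or_pos with rfl | hk
  · simpa using l2_nonneg v
  have hk' : (0 : ℝ) < √k := Real.sqrt_pos.mpr (by exact_mod_cast hk)
  calc √k * ((∑ i, |v i|) / k) = (∑ i, |v i|) / √k := by
        field_simp
        rw [Real.sq_sqrt (Nat.cast_nonneg k), mul_comm]
    _ ≤ l2 v := by rw [div_le_iff₀ hk', mul_comm]; exact hv.sum_abs_le_sqrt_mul_l2

end L2

section Convexity

variable {E : Type*} [AddCommGroup E] [Module ℝ E]

lemma abs_le_of_mem_convexHull (f : E →ₗ[ℝ] ℝ) {s : Set E} {C : ℝ} (hs : ∀ u ∈ s, |f u| ≤ C)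
    {y : E} (hy : y ∈ convexHull ℝ s) : |f y| ≤ C :=
  abs_le.mpr <| convexHull_min (fun u hu => abs_le.mp (hs u hu))
    ((convex_Icc (-C) C).linear_preimage f) hy

lemma Convex.mem_of_add_smul_mem_of_sub_smul_mem {S : Set E} (hS : Convex ℝ S) {x d : E}
    {s t : ℝ} (hs : 0 < s) (ht : 0 < t) (h₁ : x + s • d ∈ S) (h₂ : x - t • d ∈ S) : x ∈ S := by
  convert hS h₁ h₂ (a := t / (s + t)) (b := s / (s + t)) (by positivity) (by positivity)
    (by field_simp; ring) using 1
  match_scalars <;> field_simp <;> ring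

end Convexity

section Transfer

lemma abs_add_mul_sign {x t : ℝ} (hx : x ≠ 0) (ht : 0 ≤ t) :
    |x + t * SignType.sign x| = |x| + t := by
  rcases hx.lt_or_gt with h | h
  · rw [sign_neg h, SignType.coe_neg, SignType.coe_one, abs_of_neg h, abs_of_neg (by linarith)]
    ring
  · rw [sign_pos h, SignType.coe_one, abs_of_pos h, abs_of_pos (by linarith)]
    ring

lemma abs_sub_mul_sign {x t : ℝ} (hx : x ≠ 0) (ht : t ≤ |x|) :
    |x - t * SignType.sign x| = |x| - t := by
  rcases hx.lt_or_gt with h | h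
  · rw [abs_of_neg h] at ht ⊢
    rw [sign_neg h, SignType.coe_neg, SignType.coe_one, abs_of_nonpos (by linarith)]
    ring
  · rw [abs_of_pos h] at ht ⊢
    rw [sign_pos h, SignType.coe_one, abs_of_nonneg (by linarith)]
    ring

variable {p : ℕ} {α t : ℝ} {v : Fin p → ℝ} {a b : Fin p}

noncomputable def fractionalCoords (α : ℝ) (v : Fin p → ℝ) : Finset (Fin p) :=
  {i | 0 < |v i| ∧ |v i| < α}

lemma mem_fractionalCoords {i : Fin p} : i ∈ fractionalCoords α v ↔ 0 < |v i| ∧ |v i| < α := by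
  simp [fractionalCoords]

noncomputable def transferDir (v : Fin p → ℝ) (a b : Fin p) : Fin p → ℝ :=
  Pi.single a (SignType.sign (v a) : ℝ) - Pi.single b (SignType.sign (v b) : ℝ)

lemma transferDir_swap (v : Fin p → ℝ) (a b : Fin p) :
    transferDir v b a = -transferDir v a b :=
  (neg_sub _ _).symm

lemma add_smul_transferDir_apply_of_ne {i : Fin p} (hia : i ≠ a) (hib : i ≠ b) :
    (v + t • transferDir v a b) i = v i := by
  simp [transferDir, hia, hib]

lemma abs_add_smul_transferDir_apply_left (hab : a ≠ b) (ha : v a ≠ 0) (ht : 0 ≤ t) :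
    |(v + t • transferDir v a b) a| = |v a| + t := by
  simpa [transferDir, hab, mul_comm t] using abs_add_mul_sign ha ht

lemma abs_add_smul_transferDir_apply_right (hab : a ≠ b) (hb : v b ≠ 0) (ht : t ≤ |v b|) :
    |(v + t • transferDir v a b) b| = |v b| - t := by
  simpa [transferDir, hab.symm, mul_comm t, sub_eq_add_neg] using abs_sub_mul_sign hb ht

noncomputable def transfer (α : ℝ) (v : Fin p → ℝ) (a b : Fin p) : Fin p → ℝ :=
  v + min |v b| (α - |v a|) • transferDir v a b

lemma transfer_swap (α : ℝ) (v : Fin p → ℝ) (a b : Fin p) :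
    transfer α v b a = v - min |v a| (α - |v b|) • transferDir v a b := by
  rw [transfer, transferDir_swap, smul_neg, ← sub_eq_add_neg]

lemma transfer_amount_pos (ha : a ∈ fractionalCoords α v) (hb : b ∈ fractionalCoords α v) :
    0 < min |v b| (α - |v a|) :=
  lt_min (mem_fractionalCoords.mp hb).1 (sub_pos.mpr (mem_fractionalCoords.mp ha).2)

lemma abs_transfer_apply_left (hab : a ≠ b) (ha : a ∈ fractionalCoords α v)
    (hb : b ∈ fractionalCoords α v) : |transfer α v a b a| = |v a| + min |v b| (α - |v a|) :=
  abs_add_smul_transferDir_apply_left hab (abs_pos.mp (mem_fractionalCoords.mp ha).1)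
    (transfer_amount_pos ha hb).le

lemma abs_transfer_apply_right (hab : a ≠ b) (hb : b ∈ fractionalCoords α v) :
    |transfer α v a b b| = |v b| - min |v b| (α - |v a|) :=
  abs_add_smul_transferDir_apply_right hab (abs_pos.mp (mem_fractionalCoords.mp hb).1)
    (min_le_left _ _)

lemma abs_transfer_le (hab : a ≠ b) (ha : a ∈ fractionalCoords α v)
    (hb : b ∈ fractionalCoords α v) (hv : ∀ i, |v i| ≤ α) (i : Fin p) :
    |transfer α v a b i| ≤ α := by
  by_cases hia : i = a
  · subst hia
    rw [abs_transfer_apply_left hab ha hb]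
    linarith [min_le_right |v b| (α - |v i|)]
  by_cases hib : i = b
  · subst hib
    rw [abs_transfer_apply_right hab hb]
    linarith [hv i, transfer_amount_pos ha hb]
  rw [transfer, add_smul_transferDir_apply_of_ne hia hib]
  exact hv i

lemma sum_abs_transfer (hab : a ≠ b) (ha : a ∈ fractionalCoords α v)
    (hb : b ∈ fractionalCoords α v) : ∑ i, |transfer α v a b i| = ∑ i, |v i| := by
  rw [← sub_eq_zero, ← sum_sub_distrib,
    sum_eq_add a b hab (fun i _ hi => by rw [transfer, add_smul_transferDir_apply_of_ne hi.1 hi.2,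
      sub_self]) (by simp) (by simp),
    abs_transfer_apply_left hab ha hb, abs_transfer_apply_right hab hb]
  ring

lemma support_transfer_subset (ha : a ∈ fractionalCoords α v)
    (hb : b ∈ fractionalCoords α v) : Function.support (transfer α v a b) ⊆ Function.support v := by
  intro i hi
  by_cases hia : i = a
  · exact hia ▸ abs_pos.mp (mem_fractionalCoords.mp ha).1
  by_cases hib : i = b
  · exact hib ▸ abs_pos.mp (mem_fractionalCoords.mp hb).1
  rwa [Function.mem_support, transfer, add_smul_transferDir_apply_of_ne hia hib] at hi

lemma card_fractionalCoords_transfer_lt (hab : a ≠ b) (ha : a ∈ fractionalCoords α v)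
    (hb : b ∈ fractionalCoords α v) :
    #(fractionalCoords α (transfer α v a b)) < #(fractionalCoords α v) := by
  refine card_lt_card ⟨fun i hi => ?_, fun hsub => ?_⟩
  · by_cases hia : i = a
    · exact hia ▸ ha
    by_cases hib : i = b
    · exact hib ▸ hb
    rwa [mem_fractionalCoords, transfer, add_smul_transferDir_apply_of_ne hia hib,
      ← mem_fractionalCoords] at hi
  -- the transfer either empties coordinate `b` or fills coordinate `a` up to `α`
  rcases min_choice |v b| (α - |v a|) with h | h
  · have := (mem_fractionalCoords.mp (hsub hb)).1
    rw [abs_transfer_apply_right hab hb, h, sub_self] at this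
    exact this.false
  · have := (mem_fractionalCoords.mp (hsub ha)).2
    rw [abs_transfer_apply_left hab ha hb, h, add_sub_cancel] at this
    exact this.false

end Transfer

section Polytope

variable {p k : ℕ} {α : ℝ} {v : Fin p → ℝ}

lemma sparse_of_card_fractionalCoords_le_one (hv : ∀ i, |v i| ≤ α) (hsum : ∑ i, |v i| ≤ k * α)
    (hfrac : #(fractionalCoords α v) ≤ 1) : Sparse k v := by
  set S : Finset (Fin p) := {i | v i ≠ 0}
  have hS : ∀ i ∉ S, v i = 0 := fun i hi => by simpa [S] using hi
  refine ⟨S, ?_, hS⟩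
  rcases S.eq_empty_or_nonempty with hS₀ | ⟨j₀, hj₀⟩
  · simp [hS₀]
  have hfracS : fractionalCoords α v ⊆ S := fun i hi => by
    simpa [S] using abs_pos.mp (mem_fractionalCoords.mp hi).1
  obtain ⟨j, hjS, hfj⟩ : ∃ j ∈ S, fractionalCoords α v ⊆ {j} := by
    rcases (fractionalCoords α v).eq_empty_or_nonempty with hF | ⟨j, hj⟩
    · exact ⟨j₀, hj₀, hF ▸ empty_subset _⟩
    · exact ⟨j, hfracS hj, fun i hi => mem_singleton.mpr (card_le_one.mp hfrac i hi j hj)⟩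
  have hα_le : ∀ i ∈ S.erase j, α ≤ |v i| := fun i hi => by
    by_contra! hlt
    refine (mem_erase.mp hi).1 (mem_singleton.mp (hfj (mem_fractionalCoords.mpr ⟨?_, hlt⟩)))
    exact abs_pos.mpr (by simpa [S] using (mem_erase.mp hi).2)
  have hlt : (#(S.erase j) : ℝ) * α < k * α := calc
    (#(S.erase j) : ℝ) * α ≤ ∑ i ∈ S.erase j, |v i| := by
      simpa using card_nsmul_le_sum _ _ _ hα_le
    _ < ∑ i ∈ S.erase j, |v i| + |v j| :=
      lt_add_of_pos_right _ (abs_pos.mpr (by simpa [S] using hjS))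
    _ = ∑ i, |v i| := by rw [sum_erase_add _ _ hjS, sum_comp_eq_sum_of_eq_zero hS _ abs_zero]
    _ ≤ k * α := hsum
  have hcard : #(S.erase j) < k := by
    exact_mod_cast lt_of_mul_lt_mul_right hlt ((abs_nonneg _).trans (hv j))
  rw [← card_erase_add_one hjS]
  omega

theorem mem_convexHull_sparse_of_abs_le (hv : ∀ i, |v i| ≤ α) (hsum : ∑ i, |v i| ≤ k * α) :
    v ∈ convexHull ℝ
      {u | Sparse k u ∧ Function.support u ⊆ Function.support v ∧ ∀ i, |u i| ≤ α} := by
  induction hN : #(fractionalCoords α v) using Nat.strong_induction_on generalizing v with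
  | _ N ih =>
  rcases le_or_gt N 1 with hN1 | hN1
  · exact subset_convexHull ℝ _
      ⟨sparse_of_card_fractionalCoords_le_one hv hsum (hN ▸ hN1), subset_rfl, hv⟩
  have step : ∀ a b, a ≠ b → a ∈ fractionalCoords α v → b ∈ fractionalCoords α v →
      transfer α v a b ∈ convexHull ℝ
        {u | Sparse k u ∧ Function.support u ⊆ Function.support v ∧ ∀ i, |u i| ≤ α} := by
    intro a b hab ha hb
    refine convexHull_mono (fun u hu => ?_)
      (ih _ (hN ▸ card_fractionalCoords_transfer_lt hab ha hb) (abs_transfer_le hab ha hb hv)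
        (by rwa [sum_abs_transfer hab ha hb]) rfl)
    exact ⟨hu.1, hu.2.1.trans (support_transfer_subset ha hb), hu.2.2⟩
  obtain ⟨a, ha, b, hb, hab⟩ := one_lt_card.mp (hN ▸ hN1)
  refine (convex_convexHull ℝ _).mem_of_add_smul_mem_of_sub_smul_mem
    (transfer_amount_pos ha hb) (transfer_amount_pos hb ha) (step a b hab ha hb) ?_
  rw [← transfer_swap]
  exact step b a hab.symm hb ha

end Polytope

lemma sum_abs_indicator {p : ℕ} (s : Finset (Fin p)) (h : Fin p → ℝ) :
    ∑ i, |(s : Set (Fin p)).indicator h i| = ∑ i ∈ s, |h i| := by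
  simp [Set.indicator_apply, apply_ite]

lemma abs_indicator_compl_le_of_forall_abs_le {p : ℕ} {T : Finset (Fin p)} (hT : T.Nonempty)
    {h : Fin p → ℝ} (htop : ∀ i ∈ T, ∀ j ∉ T, |h j| ≤ |h i|) (j : Fin p) :
    |((Tᶜ : Finset (Fin p)) : Set (Fin p)).indicator h j| ≤ (∑ i ∈ T, |h i|) / #T := by
  by_cases hj : j ∈ T
  · simp only [coe_compl, Set.indicator_of_notMem (Set.notMem_compl_iff.mpr hj), abs_zero]
    positivity
  · rw [Set.indicator_of_mem (by simpa using hj), ← expect_eq_sum_div_card]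
    exact le_expect hT fun i hi => htop i hi j hj

lemma indicator_ne_zero_of_sum_abs_compl_le {p : ℕ} {T : Finset (Fin p)} {h : Fin p → ℝ}
    (hh : h ≠ 0) (hcone : ∑ i ∈ Tᶜ, |h i| ≤ ∑ i ∈ T, |h i|) :
    (T : Set (Fin p)).indicator h ≠ 0 := by
  refine fun hx0 => hh (funext fun i => abs_eq_zero.mp (le_antisymm ?_ (abs_nonneg _)))
  have hT0 : ∑ i ∈ T, |h i| = 0 := by rw [← sum_abs_indicator, hx0]; simp
  calc |h i| ≤ ∑ j, |h j| := single_le_sum (fun j _ => abs_nonneg (h j)) (mem_univ i)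
    _ = ∑ j ∈ T, |h j| + ∑ j ∈ Tᶜ, |h j| := (sum_add_sum_compl T _).symm
    _ ≤ 0 := by linarith

theorem one_sub_le_of_mulVec_add_eq_zero {n p k : ℕ} {Φ : Matrix (Fin n) (Fin p) ℝ} {δ θ : ℝ}
    (hθ0 : 0 ≤ θ) (hδ : ∀ c : Fin p → ℝ, Sparse k c → √(1 - δ) * l2 c ≤ l2 (Φ *ᵥ c))
    (hθ : ∀ c c' : Fin p → ℝ, Sparse k c → Sparse k c' → (∀ i, c i = 0 ∨ c' i = 0) →
      |(Φ *ᵥ c) ⬝ᵥ (Φ *ᵥ c')| ≤ θ * l2 c * l2 c')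
    {x y : Fin p → ℝ} (hx : Sparse k x) (hx0 : x ≠ 0) (hxy : Φ *ᵥ (x + y) = 0)
    {s : Set (Fin p → ℝ)} (hs : ∀ u ∈ s, Sparse k u ∧ (∀ i, x i = 0 ∨ u i = 0) ∧ l2 u ≤ l2 x)
    (hy : y ∈ convexHull ℝ s) : 1 - δ ≤ θ := by
  by_contra! hθδ
  have hcross : |(Φ *ᵥ x) ⬝ᵥ (Φ *ᵥ y)| ≤ θ * l2 x * l2 x :=
    abs_le_of_mem_convexHull (dotProductBilin ℝ ℝ (Φ *ᵥ x) ∘ₗ Φ.mulVecLin) (fun u hu =>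
      (hθ x u hx (hs u hu).1 (hs u hu).2.1).trans
        (mul_le_mul_of_nonneg_left (hs u hu).2.2 (mul_nonneg hθ0 (l2_nonneg x)))) hy
  have hΦx : l2 (Φ *ᵥ x) ^ 2 = -((Φ *ᵥ x) ⬝ᵥ (Φ *ᵥ y)) := by
    rw [l2_sq, ← dotProduct_neg, ← eq_neg_of_add_eq_zero_left (by rwa [← mulVec_add])]
  have hlower : (1 - δ) * l2 x ^ 2 ≤ l2 (Φ *ᵥ x) ^ 2 := by
    calc (1 - δ) * l2 x ^ 2 = (√(1 - δ) * l2 x) ^ 2 := by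
          rw [mul_pow, Real.sq_sqrt (by linarith)]
      _ ≤ l2 (Φ *ᵥ x) ^ 2 :=
          pow_le_pow_left₀ (mul_nonneg (Real.sqrt_nonneg _) (l2_nonneg x)) (hδ x hx) 2
  have hx2 : 0 < l2 x ^ 2 := pow_pos (l2_pos hx0) 2
  nlinarith [neg_le_abs ((Φ *ᵥ x) ⬝ᵥ (Φ *ᵥ y))]

theorem null_space_property_general
    {n p k : ℕ} (Φ : Matrix (Fin n) (Fin p) ℝ) (δ θ : ℝ)
    (hθ0 : 0 ≤ θ)
    (hδ : ∀ c : Fin p → ℝ, Sparse k c →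
      Real.sqrt (1 - δ) * l2 c ≤ l2 (Φ.mulVec c) ∧
      l2 (Φ.mulVec c) ≤ Real.sqrt (1 + δ) * l2 c)
    (hθ : ∀ c c' : Fin p → ℝ, Sparse k c → Sparse k c' → (∀ i, c i = 0 ∨ c' i = 0) →
      |dotProduct (Φ.mulVec c) (Φ.mulVec c')| ≤ θ * l2 c * l2 c')
    (hcond : δ + θ < 1) :
    ∀ h : Fin p → ℝ, Φ.mulVec h = 0 → h ≠ 0 →
      ∀ T : Finset (Fin p), T.card = k →
        (∀ i ∈ T, ∀ j ∉ T, |h j| ≤ |h i|) →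
        ∑ i ∈ T, |h i| < ∑ i ∈ Tᶜ, |h i| := by
  intro h hΦh hh T hT htop
  by_contra! hcone
  set x := (T : Set (Fin p)).indicator h
  set y := ((Tᶜ : Finset (Fin p)) : Set (Fin p)).indicator h
  have hx : Sparse k x := ⟨T, hT.le, fun i hi => Set.indicator_of_notMem (by simpa using hi) h⟩
  have hsumx : ∑ i, |x i| = ∑ i ∈ T, |h i| := sum_abs_indicator T h
  have hsumy : ∑ i, |y i| = ∑ i ∈ Tᶜ, |h i| := sum_abs_indicator Tᶜ h
  have hxy : x + y = h := by simp only [x, y, coe_compl, Set.indicator_self_add_compl]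
  have hx0 : x ≠ 0 := indicator_ne_zero_of_sum_abs_compl_le hh hcone
  have hTne : T.Nonempty := nonempty_iff_ne_empty.mpr fun hT0 => hx0 (by simp [x, hT0]; rfl)
  have hy := mem_convexHull_sparse_of_abs_le (k := k)
    (abs_indicator_compl_le_of_forall_abs_le hTne htop) (by
      rw [hsumy, hT, mul_div_cancel₀ _ (by simp [← hT, hTne.ne_empty])]
      exact hcone)
  refine (one_sub_le_of_mulVec_add_eq_zero hθ0 (fun c hc => (hδ c hc).1) hθ hx hx0
    (by rwa [hxy]) (fun u hu => ⟨hu.1, fun i => ?_, ?_⟩) hy).not_gt (by linarith)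
  · by_cases hi : i ∈ T
    · exact .inr (Function.notMem_support.mp fun hui => hu.2.1 hui (by simp [hi]))
    · exact .inl (by simp [x, hi])
  · have hul2 := hu.1.l2_le_sqrt_mul (by positivity) hu.2.2
    rw [hT, ← hsumx] at hul2
    exact hul2.trans hx.sqrt_mul_sum_abs_div_le_l2

/-- Under `δ_k + θ_{k,k} < 1`, the null space of `Φ` contains no nonzero `h` with
`‖h_{Tᶜ}‖₁ ≤ ‖h_T‖₁` for `T` the set of the `k` largest-magnitude entries of `h`:
the null space property of order `k` holds. -/
theorem null_space_property
    {n p k : ℕ} (Φ : Matrix (Fin n) (Fin p) ℝ) (δ θ : ℝ)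
    (hδ0 : 0 ≤ δ) (hθ0 : 0 ≤ θ)
    (hδ : ∀ c : Fin p → ℝ, Sparse k c →
      Real.sqrt (1 - δ) * l2 c ≤ l2 (Φ.mulVec c) ∧
      l2 (Φ.mulVec c) ≤ Real.sqrt (1 + δ) * l2 c)
    (hθ : ∀ c c' : Fin p → ℝ, Sparse k c → Sparse k c' → (∀ i, c i = 0 ∨ c' i = 0) →
      |dotProduct (Φ.mulVec c) (Φ.mulVec c')| ≤ θ * l2 c * l2 c')
    (hcond : δ + θ < 1) :
    ∀ h : Fin p → ℝ, Φ.mulVec h = 0 → h ≠ 0 →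
      ∀ T : Finset (Fin p), T.card = k →
        (∀ i ∈ T, ∀ j ∉ T, |h j| ≤ |h i|) →
        ∑ i ∈ T, |h i| < ∑ i ∈ Tᶜ, |h i| :=
  null_space_property_general Φ δ θ hθ0 hδ hθ hcond
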